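/- arXiv:1509.02435 — 2 statements merged into one kernel-verified Lean document; each statement's English description precedes it below -/
import Mathlib

section
/- Let G be a finitely generated group with finite generating set X, and let S ⊆ G. Suppose G = Sg₁ ∪ ... ∪ Sgₘ for some elements g₁, ..., gₘ each of word length at most C with respect to X. Then liminf_{k→∞} |S ∩ B_X(k)| / |B_X(k)| ≥ 1/(m·|B_X(C)|), where B_X(k) denotes the ball of radius k centered at the identity in the word metric d_X. -/
/-!
Every `x` in the ball of radius `k` is `s * g i` with `s ∈ S`, and then `s = x * (g i)⁻¹` lies in
the ball of radius `k + C`; hence `|B(k)| ≤ m |S ∩ B(k + C)|`. Combined with submultiplicativity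
`|B(k + C)| ≤ |B(k)| |B(C)|` this gives `|S ∩ B(n)| / |B(n)| ≥ 1 / (m |B(C)|)` for every `n ≥ C`.
-/

/-- The ball of radius `k` about the identity in the word metric on `G`
determined by the generating set `X` (with respect to `X ∪ X⁻¹`). -/
def ball {G : Type*} [Group G] (X : Set G) (k : ℕ) : Set G :=
  {g | ∃ l : List G, (∀ x ∈ l, x ∈ X ∨ x⁻¹ ∈ X) ∧ l.length ≤ k ∧ l.prod = g}

open scoped Pointwise

section WordBall

variable {G : Type*} [Group G] {X : Set G}

lemma one_mem_ball (X : Set G) (k : ℕ) : (1 : G) ∈ ball X k :=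
  ⟨[], by simp, by simp, by simp⟩

lemma ball_zero (X : Set G) : ball X 0 = {1} := by
  ext x
  constructor
  · rintro ⟨l, -, hlen, rfl⟩
    simp [List.eq_nil_of_length_eq_zero (Nat.le_zero.mp hlen)]
  · rintro rfl
    exact one_mem_ball X 0

lemma ball_one_subset (X : Set G) : ball X 1 ⊆ insert 1 (X ∪ X⁻¹) := by
  rintro x ⟨l, hmem, hlen, rfl⟩
  match l, hlen with
  | [], _ => simp
  | [a], _ => simpa using .inr (hmem a (List.mem_singleton_self a))

lemma inv_mem_ball {k : ℕ} {x : G} (hx : x ∈ ball X k) : x⁻¹ ∈ ball X k := by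
  obtain ⟨l, hmem, hlen, rfl⟩ := hx
  refine ⟨(l.map (·⁻¹)).reverse, ?_, by simpa using hlen, (List.prod_inv_reverse l).symm⟩
  simp only [List.mem_reverse, List.mem_map, forall_exists_index, and_imp]
  rintro _ a ha rfl
  simpa [or_comm] using hmem a ha

lemma mul_mem_ball {j k : ℕ} {a b : G} (ha : a ∈ ball X j) (hb : b ∈ ball X k) :
    a * b ∈ ball X (j + k) := by
  obtain ⟨l₁, hm₁, hl₁, rfl⟩ := ha
  obtain ⟨l₂, hm₂, hl₂, rfl⟩ := hb
  refine ⟨l₁ ++ l₂, ?_, by rw [List.length_append]; omega, List.prod_append⟩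
  simp only [List.mem_append]
  rintro y (hy | hy)
  exacts [hm₁ y hy, hm₂ y hy]

lemma ball_add_subset_mul (X : Set G) (j k : ℕ) : ball X (j + k) ⊆ ball X j * ball X k := by
  rintro x ⟨l, hmem, hlen, rfl⟩
  refine ⟨(l.take j).prod, ?_, (l.drop j).prod, ?_, List.prod_take_mul_prod_drop l j⟩
  · exact ⟨l.take j, fun y hy => hmem y (List.mem_of_mem_take hy), List.length_take_le j l, rfl⟩
  · refine ⟨l.drop j, fun y hy => hmem y (List.mem_of_mem_drop hy), ?_, rfl⟩
    rw [List.length_drop]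
    omega

lemma ball_finite (hX : X.Finite) (k : ℕ) : (ball X k).Finite := by
  induction k with
  | zero => simp [ball_zero]
  | succ k ih =>
    have hone : (ball X 1).Finite :=
      ((hX.union hX.inv).insert 1).subset (ball_one_subset X)
    exact (ih.mul hone).subset (ball_add_subset_mul X k 1)

lemma natCard_ball_pos (hX : X.Finite) (k : ℕ) : 0 < Nat.card (ball X k) :=
  have := (ball_finite hX k).to_subtype
  Nat.card_pos_iff.mpr ⟨⟨⟨1, one_mem_ball X k⟩⟩, inferInstance⟩

lemma natCard_ball_add_le (hX : X.Finite) (j k : ℕ) :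
    Nat.card (ball X (j + k)) ≤ Nat.card (ball X j) * Nat.card (ball X k) :=
  (Nat.card_mono ((ball_finite hX j).mul (ball_finite hX k)) (ball_add_subset_mul X j k)).trans
    Set.natCard_mul_le

variable {S : Set G} {C m : ℕ} {g : Fin m → G}

lemma ball_subset_inter_ball_mul_range (hg : ∀ i, g i ∈ ball X C)
    (hcover : ∀ x : G, ∃ i : Fin m, ∃ s ∈ S, x = s * g i) (k : ℕ) :
    ball X k ⊆ (S ∩ ball X (k + C)) * Set.range g := by
  intro x hx
  obtain ⟨i, s, hs, rfl⟩ := hcover x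
  have hsball : s ∈ ball X (k + C) := by
    simpa using mul_mem_ball hx (inv_mem_ball (hg i))
  exact ⟨s, ⟨hs, hsball⟩, g i, ⟨i, rfl⟩, rfl⟩

lemma natCard_ball_le_mul_natCard_inter_ball (hX : X.Finite) (hg : ∀ i, g i ∈ ball X C)
    (hcover : ∀ x : G, ∃ i : Fin m, ∃ s ∈ S, x = s * g i) (k : ℕ) :
    Nat.card (ball X k) ≤ Nat.card (S ∩ ball X (k + C) : Set G) * m := by
  have hfin : (S ∩ ball X (k + C)).Finite := (ball_finite hX _).subset Set.inter_subset_right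
  calc Nat.card (ball X k)
      ≤ Nat.card (S ∩ ball X (k + C) : Set G) * Nat.card (Set.range g) :=
        (Nat.card_mono (hfin.mul (Set.finite_range g))
          (ball_subset_inter_ball_mul_range hg hcover k)).trans Set.natCard_mul_le
    _ ≤ Nat.card (S ∩ ball X (k + C) : Set G) * m := by
        gcongr
        simpa using Finite.card_range_le g

lemma natCard_ball_le_mul_natCard_inter_ball_of_le (hX : X.Finite) (hg : ∀ i, g i ∈ ball X C)
    (hcover : ∀ x : G, ∃ i : Fin m, ∃ s ∈ S, x = s * g i) {n : ℕ} (hn : C ≤ n) :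
    Nat.card (ball X n) ≤ m * Nat.card (ball X C) * Nat.card (S ∩ ball X n : Set G) := by
  obtain ⟨k, rfl⟩ := Nat.exists_eq_add_of_le' hn
  calc Nat.card (ball X (k + C))
      ≤ Nat.card (ball X k) * Nat.card (ball X C) := natCard_ball_add_le hX k C
    _ ≤ Nat.card (S ∩ ball X (k + C) : Set G) * m * Nat.card (ball X C) := by
        gcongr
        exact natCard_ball_le_mul_natCard_inter_ball hX hg hcover k
    _ = m * Nat.card (ball X C) * Nat.card (S ∩ ball X (k + C) : Set G) := by ring

lemma one_div_le_density_of_le (hX : X.Finite) (hg : ∀ i, g i ∈ ball X C)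
    (hcover : ∀ x : G, ∃ i : Fin m, ∃ s ∈ S, x = s * g i) {n : ℕ} (hn : C ≤ n) :
    (1 : ℝ) / (m * Nat.card (ball X C)) ≤
      (Nat.card (S ∩ ball X n : Set G) : ℝ) / Nat.card (ball X n) := by
  obtain ⟨i, -⟩ := hcover 1
  have hm : (0 : ℝ) < m := by exact_mod_cast i.pos
  have hC : (0 : ℝ) < Nat.card (ball X C) := by exact_mod_cast natCard_ball_pos hX C
  have hn' : (0 : ℝ) < Nat.card (ball X n) := by exact_mod_cast natCard_ball_pos hX n
  rw [div_le_div_iff₀ (by positivity) hn', one_mul, mul_comm]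
  exact_mod_cast natCard_ball_le_mul_natCard_inter_ball_of_le hX hg hcover hn

end WordBall

theorem liminf_density_of_cover_general {G : Type*} [Group G] (X : Set G) (hXfin : X.Finite)
    (S : Set G) (C m : ℕ) (g : Fin m → G)
    (hg : ∀ i, g i ∈ ball X C)
    (hcover : ∀ x : G, ∃ i : Fin m, ∃ s ∈ S, x = s * g i) :
    (1 : ℝ) / (m * Nat.card (ball X C)) ≤
      Filter.liminf
        (fun k : ℕ => (Nat.card ↥(S ∩ ball X k) : ℝ) / (Nat.card ↥(ball X k) : ℝ))
        Filter.atTop := by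
  have hdensity_le_one (k : ℕ) :
      (Nat.card ↥(S ∩ ball X k) : ℝ) / (Nat.card ↥(ball X k) : ℝ) ≤ 1 :=
    div_le_one_of_le₀
      (by exact_mod_cast Nat.card_mono (ball_finite hXfin k) Set.inter_subset_right)
      (Nat.cast_nonneg _)
  refine Filter.le_liminf_of_le (Filter.isCoboundedUnder_ge_of_le _ hdensity_le_one) ?_
  filter_upwards [Filter.eventually_ge_atTop C] with n hn
  exact one_div_le_density_of_le hXfin hg hcover hn

theorem liminf_density_of_cover {G : Type*} [Group G] (X : Set G) (hXfin : X.Finite)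
    (hXgen : Subgroup.closure X = ⊤) (S : Set G) (C m : ℕ) (g : Fin m → G)
    (hg : ∀ i, g i ∈ ball X C)
    (hcover : ∀ x : G, ∃ i : Fin m, ∃ s ∈ S, x = s * g i) :
    (1 : ℝ) / (m * Nat.card (ball X C)) ≤
      Filter.liminf
        (fun k : ℕ => (Nat.card ↥(S ∩ ball X k) : ℝ) / (Nat.card ↥(ball X k) : ℝ))
        Filter.atTop :=
  liminf_density_of_cover_general X hXfin S C m g hg hcover
end

section
/- Let F be a free group on two generators x and y. Then the commutator [x,y] = x y x⁻¹ y⁻¹ is a test element of F: every endomorphism of F fixing [x,y] is an automorphism. -/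
/-!
Write `a = φ x` and `b = φ y`, so that `⁅a, b⁆ = ⁅x, y⁆`. The transvections `x ↦ x y^{±1}` and
`y ↦ y x^{±1}` are automorphisms fixing `⁅x, y⁆`; precomposing `φ` with one of them replaces
`(a, b)` by `(a b^{±1}, b)` or `(a, b a^{±1})`, so we may descend on `|a| + |b|` as long as one of
these moves shortens the pair. When none does, free cancellation in `a b`, `b a⁻¹` and `b a`
leaves nonempty middle pieces, and `⁅a, b⁆` turns out to be spelled without cancellation by a word
that is at least two letters longer than each of `a` and `b`. As `|⁅x, y⁆| = 4`, both have length
at most two, and a finite check leaves only `(x, y)`, `(x y, x⁻¹)` and `(y⁻¹, y x)`, which define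
automorphisms.
-/

open Function List
open scoped commutatorElement

section Commutator

variable {G : Type*} [Group G]

theorem commutatorElement_mul_zpow_left (a b : G) (k : ℤ) : ⁅a * b ^ k, b⁆ = ⁅a, b⁆ := by
  simp only [commutatorElement_def]; group

theorem commutatorElement_mul_zpow_right (a b : G) (k : ℤ) : ⁅a, b * a ^ k⁆ = ⁅a, b⁆ := by
  simp only [commutatorElement_def]; group

end Commutator

namespace FreeGroup

variable {α : Type*}

theorem isReduced_invRev {L : List (α × Bool)} : IsReduced (invRev L) ↔ IsReduced L := by
  rw [IsReduced, IsReduced, invRev, isChain_reverse, isChain_map]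
  exact IsChain.iff fun x y => by simp [eq_comm]

theorem IsReduced.eq_nil_of_invRev_append_self {L : List (α × Bool)}
    (h : IsReduced (invRev L ++ L)) : L = [] := by
  obtain _ | ⟨x, L⟩ := L
  · rfl
  · have hx := h.infix (L₁ := [(x.1, !x.2), x]) ⟨invRev L, L, by simp [FreeGroup.invRev]⟩
    simp [IsReduced] at hx

theorem IsReduced.exists_eq_append_invRev_append {L₁ L₂ : List (α × Bool)}
    (h₁ : IsReduced L₁) (h₂ : IsReduced L₂) :
    ∃ U C V, L₁ = U ++ C ∧ L₂ = invRev C ++ V ∧ IsReduced (U ++ V) := by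
  induction L₁ using reverseRecOn generalizing L₂ with
  | nil => exact ⟨[], [], L₂, rfl, rfl, h₂⟩
  | append_singleton L₁ x ih =>
    obtain _ | ⟨y, L₂⟩ := L₂
    · exact ⟨L₁ ++ [x], [], [], by simp, rfl, by simpa using h₁⟩
    by_cases hxy : y = (x.1, !x.2)
    · obtain ⟨U, C, V, rfl, rfl, hUV⟩ :=
        ih (h₁.infix ⟨[], [x], rfl⟩) (h₂.infix (L₁ := L₂) ⟨[y], [], by simp⟩)
      exact ⟨U, C ++ [x], V, by simp, by simp [hxy, FreeGroup.invRev], hUV⟩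
    · refine ⟨L₁ ++ [x], [], y :: L₂, by simp, rfl, ?_⟩
      have hxy' : IsReduced ([x] ++ y :: L₂) := by
        refine isReduced_cons_cons.2 ⟨fun h => ?_, h₂⟩
        by_contra h'
        exact hxy (Prod.ext h.symm (Bool.eq_not_iff.2 (Ne.symm h')))
      simpa using h₁.append_overlap hxy' (cons_ne_nil x [])

/- The length bounds keep the prefix `P⁻¹` and the suffix `Q` from overlapping; if they met
exactly, `P = Q` would make the reduced word `Q⁻¹ Q`. -/
theorem IsReduced.exists_of_invRev_append_eq_append {P Q B₁ B₂ u : List (α × Bool)}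
    (h : IsReduced (invRev P ++ B₁)) (hne : invRev P ++ B₁ ≠ [])
    (he : invRev P ++ B₁ = B₂ ++ Q) (hPu : P <:+ u) (hQu : Q <:+ u)
    (hP : P.length ≤ B₁.length) (hQ : Q.length ≤ B₂.length) :
    ∃ M ≠ [], B₁ = M ++ Q ∧ B₂ = invRev P ++ M := by
  have hlen := congrArg length he
  simp only [length_append, invRev_length] at hlen
  obtain ⟨M, rfl⟩ : Q <:+ B₁ :=
    suffix_of_suffix_length_le (he ▸ suffix_append B₂ Q) (suffix_append _ B₁) (by omega)
  refine ⟨M, ?_, rfl, (append_cancel_right (by simpa using he)).symm⟩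
  rintro rfl
  simp only [nil_append] at h hne hP hlen
  obtain rfl : P = Q := (suffix_of_suffix_length_le hPu hQu hP).eq_of_length (by omega)
  exact hne (by simp [h.eq_nil_of_invRev_append_self])

theorem bijective_of_map_map_of {β : Type*} {f : FreeGroup α →* FreeGroup β}
    {g : FreeGroup β →* FreeGroup α} (hfg : ∀ b, f (g (of b)) = of b)
    (hgf : ∀ a, g (f (of a)) = of a) : Bijective f :=
  (f.toMulEquiv g (ext_hom _ _ hgf) (ext_hom _ _ hfg)).bijective

variable [DecidableEq α]

theorem exists_toWord_mul_eq (a b : FreeGroup α) :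
    ∃ U C V, a.toWord = U ++ C ∧ b.toWord = invRev C ++ V ∧ (a * b).toWord = U ++ V := by
  obtain ⟨U, C, V, ha, hb, hUV⟩ :=
    IsReduced.exists_eq_append_invRev_append (isReduced_toWord (x := a)) isReduced_toWord
  refine ⟨U, C, V, ha, hb, ?_⟩
  have hab : a * b = mk (U ++ V) := by
    rw [← mk_toWord (x := a), ← mk_toWord (x := b), ha, hb, ← mul_mk, ← mul_mk, ← mul_mk, ← inv_mk]
    group
  rw [hab, toWord_mk, hUV.reduce_eq]

theorem toWord_commutatorElement_eq {a b : FreeGroup α} {A B M N P Q R : List (α × Bool)}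
    (haP : a.toWord = A ++ P) (hbP : b.toWord = invRev P ++ (M ++ Q))
    (haR : a.toWord = invRev R ++ (N ++ Q)) (hbR : b.toWord = B ++ R)
    (hAM : IsReduced (A ++ M)) (hMN : IsReduced (M ++ invRev N)) (hBN : IsReduced (B ++ N))
    (hM : M ≠ []) (hN : N ≠ []) :
    ⁅a, b⁆.toWord = A ++ M ++ invRev N ++ invRev B := by
  have hW : ⁅a, b⁆ = mk (A ++ M ++ invRev N ++ invRev B) :=
    calc ⁅a, b⁆
        = mk (A ++ P) * mk (invRev P ++ (M ++ Q)) * (mk (invRev R ++ (N ++ Q)))⁻¹ *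
            (mk (B ++ R))⁻¹ := by
          rw [← haP, ← hbP, ← haR, ← hbR, mk_toWord, mk_toWord, commutatorElement_def]
      _ = _ := by simp only [← mul_mk, ← inv_mk]; group
  have hNB : IsReduced (invRev N ++ invRev B) := by rwa [← invRev_append, isReduced_invRev]
  rw [hW, toWord_mk, IsReduced.reduce_eq]
  exact (hAM.append_overlap hMN hM).append_overlap hNB (by simpa [FreeGroup.invRev] using hN)

def IsTransvectionMinimal (a b : FreeGroup α) : Prop :=
  norm a ≤ norm (a * b) ∧ norm a ≤ norm (a * b⁻¹) ∧ norm b ≤ norm (b * a) ∧ norm b ≤ norm (b * a⁻¹)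

instance (a b : FreeGroup α) : Decidable (IsTransvectionMinimal a b) :=
  inferInstanceAs (Decidable (_ ∧ _))

theorem IsTransvectionMinimal.norm_add_two_le_norm_commutatorElement {a b : FreeGroup α}
    (h : IsTransvectionMinimal a b) (ha : a ≠ 1) (hb : b ≠ 1) :
    norm a + 2 ≤ norm ⁅a, b⁆ ∧ norm b + 2 ≤ norm ⁅a, b⁆ := by
  obtain ⟨h₁, h₂, h₃, h₄⟩ := h
  obtain ⟨A, P, B₁, haP, hbP, hab⟩ := exists_toWord_mul_eq a b
  obtain ⟨B₂, Q, T, hbQ, haQ, hba'⟩ := exists_toWord_mul_eq b a⁻¹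
  obtain ⟨B, R, A₃, hbR, haR, hba⟩ := exists_toWord_mul_eq b a
  replace haQ : a.toWord = invRev T ++ Q := by simpa using congrArg invRev haQ
  rw [← norm_inv_eq (x := a * b⁻¹), mul_inv_rev, inv_inv] at h₂
  simp only [norm] at h₁ h₂ h₃ h₄
  rw [haP, hab] at h₁
  rw [haQ, hba'] at h₂
  rw [hbR, hba] at h₃
  rw [hbQ, hba'] at h₄
  simp only [length_append, invRev_length] at h₁ h₂ h₃ h₄
  obtain ⟨M, hM, rfl, rfl⟩ := IsReduced.exists_of_invRev_append_eq_append (u := a.toWord)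
    (hbP ▸ isReduced_toWord) (hbP ▸ toWord_eq_nil_iff.not.2 hb) (hbP.symm.trans hbQ)
    (haP ▸ suffix_append _ _) (haQ ▸ suffix_append _ _) (by omega) (by omega)
  obtain ⟨N, hN, rfl, hT⟩ := IsReduced.exists_of_invRev_append_eq_append (u := b.toWord)
    (haR ▸ isReduced_toWord) (haR ▸ toWord_eq_nil_iff.not.2 ha) (haR.symm.trans haQ)
    (hbR ▸ suffix_append _ _) (hbQ ▸ suffix_append _ _) (by omega) (by simpa using h₄)
  obtain rfl : T = invRev N ++ R := by simpa using congrArg invRev hT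
  -- Now `a = A P = R⁻¹ N Q` and `b = P⁻¹ M Q = B R`.
  have hW := toWord_commutatorElement_eq haP hbP haR hbR
    ((isReduced_toWord (x := a * b)).infix ⟨[], Q, by simp [hab]⟩)
    ((isReduced_toWord (x := b * a⁻¹)).infix ⟨invRev P, R, by simp [hba']⟩)
    ((isReduced_toWord (x := b * a)).infix ⟨[], Q, by simp [hba]⟩) hM hN
  have hMN : M.length ≠ 0 ∧ N.length ≠ 0 := by simp [hM, hN]
  have la₁ := congrArg length haP
  have la₂ := congrArg length haR
  have lb₁ := congrArg length hbP
  have lb₂ := congrArg length hbR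
  simp only [norm, hW]
  simp only [length_append, invRev_length] at la₁ la₂ lb₁ lb₂ h₁ h₃ ⊢
  omega

theorem norm_commutatorElement_of_of {i j : α} (hij : i ≠ j) : norm ⁅of i, of j⁆ = 4 := by
  have hW : ⁅of i, of j⁆ = mk [(i, true), (j, true), (i, false), (j, false)] := rfl
  rw [norm, hW, toWord_mk, IsReduced.reduce_eq]
  · rfl
  · simp [IsReduced, hij, hij.symm]

theorem exists_eq_mk_of_norm_le_two {a : FreeGroup α} (ha : norm a ≤ 2) :
    ∃ p q : Option (α × Bool), a = mk (p.toList ++ q.toList) := by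
  rw [norm] at ha
  rw [← mk_toWord (x := a)]
  generalize a.toWord = L at ha ⊢
  match L, ha with
  | [], _ => exact ⟨none, none, rfl⟩
  | [x], _ => exact ⟨some x, none, rfl⟩
  | [x, y], _ => exact ⟨some x, some y, rfl⟩
  | _ :: _ :: _ :: _, h => simp at h

def transvection (i j : α) (k : ℤ) : FreeGroup α →* FreeGroup α :=
  FreeGroup.lift (update of i (of i * of j ^ k))

@[simp]
theorem transvection_of_self (i j : α) (k : ℤ) : transvection i j k (of i) = of i * of j ^ k := by
  simp [transvection]

@[simp]
theorem transvection_of_of_ne {i l : α} (j : α) (k : ℤ) (h : l ≠ i) :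
    transvection i j k (of l) = of l := by
  simp [transvection, h]

theorem transvection_bijective {i j : α} (hij : i ≠ j) (k : ℤ) :
    Bijective (transvection i j k) := by
  refine bijective_of_map_map_of (g := transvection i j (-k)) ?_ ?_ <;> intro l <;>
    rcases eq_or_ne l i with rfl | hl <;> simp [*, hij.symm]

theorem transvection_commutatorElement {i j : Fin 2} (hij : i ≠ j) (k : ℤ) :
    transvection i j k ⁅of (0 : Fin 2), of (1 : Fin 2)⁆ = ⁅of (0 : Fin 2), of (1 : Fin 2)⁆ := by
  fin_cases i <;> fin_cases j <;> simp_all [map_commutatorElement,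
    commutatorElement_mul_zpow_left, commutatorElement_mul_zpow_right]

set_option synthInstance.maxSize 1000 in
theorem eq_of_isTransvectionMinimal_of_norm_le_two {a b : FreeGroup (Fin 2)}
    (hc : ⁅a, b⁆ = ⁅of (0 : Fin 2), of (1 : Fin 2)⁆) (h : IsTransvectionMinimal a b)
    (ha : norm a ≤ 2) (hb : norm b ≤ 2) :
    a = of 0 ∧ b = of 1 ∨ a = of 0 * of 1 ∧ b = (of 0)⁻¹ ∨ a = (of 1)⁻¹ ∧ b = of 1 * of 0 := by
  obtain ⟨p₁, p₂, rfl⟩ := exists_eq_mk_of_norm_le_two ha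
  obtain ⟨q₁, q₂, rfl⟩ := exists_eq_mk_of_norm_le_two hb
  clear ha hb
  revert p₁ p₂ q₁ q₂
  decide

theorem bijective_of_isTransvectionMinimal {φ : FreeGroup (Fin 2) →* FreeGroup (Fin 2)}
    (hφ : φ ⁅of (0 : Fin 2), of (1 : Fin 2)⁆ = ⁅of (0 : Fin 2), of (1 : Fin 2)⁆)
    (h : IsTransvectionMinimal (φ (of 0)) (φ (of 1))) : Bijective φ := by
  rw [map_commutatorElement] at hφ
  have hc : ⁅of (0 : Fin 2), of (1 : Fin 2)⁆ ≠ 1 :=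
    ne_of_apply_ne norm (by rw [norm_commutatorElement_of_of zero_ne_one, norm_one]; decide)
  have h₀ : φ (of 0) ≠ 1 := fun h₀ => hc (by rw [← hφ, h₀, commutatorElement_one_left])
  have h₁ : φ (of 1) ≠ 1 := fun h₁ => hc (by rw [← hφ, h₁, commutatorElement_one_right])
  obtain ⟨ha, hb⟩ := h.norm_add_two_le_norm_commutatorElement h₀ h₁
  rw [hφ, norm_commutatorElement_of_of (by decide)] at ha hb
  rcases eq_of_isTransvectionMinimal_of_norm_le_two hφ h (by omega) (by omega) with
    ⟨e₀, e₁⟩ | ⟨e₀, e₁⟩ | ⟨e₀, e₁⟩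
  · exact bijective_of_map_map_of (g := MonoidHom.id _) (by simp [Fin.forall_fin_two, e₀, e₁])
      (by simp [Fin.forall_fin_two, e₀, e₁])
  · exact bijective_of_map_map_of (g := FreeGroup.lift ![(of 1)⁻¹, of 1 * of 0])
      (by simp [Fin.forall_fin_two, e₀, e₁]) (by simp [Fin.forall_fin_two, e₀, e₁])
  · exact bijective_of_map_map_of (g := FreeGroup.lift ![of 0 * of 1, (of 0)⁻¹])
      (by simp [Fin.forall_fin_two, e₀, e₁]) (by simp [Fin.forall_fin_two, e₀, e₁])

end FreeGroup

open FreeGroup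

theorem nielsen_commutator_test_element
    (φ : FreeGroup (Fin 2) →* FreeGroup (Fin 2))
    (hφ : φ (FreeGroup.of 0 * FreeGroup.of 1 * (FreeGroup.of 0)⁻¹ * (FreeGroup.of 1)⁻¹) =
      FreeGroup.of 0 * FreeGroup.of 1 * (FreeGroup.of 0)⁻¹ * (FreeGroup.of 1)⁻¹) :
    Function.Bijective φ := by
  rw [← commutatorElement_def] at hφ
  induction hn : norm (φ (of 0)) + norm (φ (of 1)) using Nat.strong_induction_on
    generalizing φ with
  | _ n ih =>
  have descend (σ : FreeGroup (Fin 2) →* FreeGroup (Fin 2)) (hσ : Bijective σ)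
      (hσc : σ ⁅of (0 : Fin 2), of (1 : Fin 2)⁆ = ⁅of (0 : Fin 2), of (1 : Fin 2)⁆)
      (hlt : norm (φ (σ (of 0))) + norm (φ (σ (of 1))) < n) : Bijective φ :=
    (Bijective.of_comp_iff φ hσ).1
      (ih _ hlt (φ.comp σ) (by rw [MonoidHom.comp_apply, hσc, hφ]) rfl)
  by_cases h : IsTransvectionMinimal (φ (of 0)) (φ (of 1))
  · exact bijective_of_isTransvectionMinimal hφ h
  simp only [IsTransvectionMinimal, not_and_or, not_le] at h
  rcases h with h | h | h | h
  · exact descend _ (transvection_bijective zero_ne_one 1)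
      (transvection_commutatorElement zero_ne_one 1) (by simpa [← hn] using h)
  · exact descend _ (transvection_bijective zero_ne_one (-1))
      (transvection_commutatorElement zero_ne_one (-1)) (by simpa [← hn] using h)
  · exact descend _ (transvection_bijective one_ne_zero 1)
      (transvection_commutatorElement one_ne_zero 1) (by simpa [← hn] using h)
  · exact descend _ (transvection_bijective one_ne_zero (-1))
      (transvection_commutatorElement one_ne_zero (-1)) (by simpa [← hn] using h)
end
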